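/- arXiv:0902.1227 — 10 statements merged into one kernel-verified Lean document; each statement's English description precedes it below -/
import Mathlib

section
/- Let R be a strict partial order on a set X and let W ⊆ X satisfy π(x) ∩ W = ∅ for every x ∈ W (i.e. W is an antichain in which no element is a parent of another). Define Q̃ = {x ∈ X \ W : π(x) ∩ W = ∅}. Then Q̃ is downward closed, and W is exactly the set of minimal elements of X \ Q̃ with respect to R. -/
/-- If `W ⊆ X` satisfies `π(x) ∩ W = ∅` for every `x ∈ W`, then
`Q̃ = {x ∈ X \ W : π(x) ∩ W = ∅}` is downward closed and `W` is exactly the set of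
minimal elements of `X \ Q̃` with respect to `R`. -/
theorem stmt_4 {E : Type*} (X W : Set E) (R : E → E → Prop)
    (hWX : W ⊆ X)
    (hdom : ∀ a b, R a b → a ∈ X ∧ b ∈ X)
    (hirr : ∀ a, ¬ R a a)
    (htrans : ∀ a b c, R a b → R b c → R a c)
    (hanti : ∀ x ∈ W, ∀ y ∈ W, ¬ R y x)
    (Qt : Set E)
    (hQt : Qt = {x | x ∈ X \ W ∧ ∀ y ∈ W, ¬ R y x}) :
    (∀ x ∈ Qt, ∀ y ∈ X, R y x → y ∈ Qt) ∧
    W = {x | x ∈ X \ Qt ∧ ∀ y ∈ X \ Qt, ¬ R y x} := by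
  subst hQt
  constructor
  · rintro x ⟨⟨hxX, hxW⟩, hpar⟩ y hyX hyx
    refine ⟨⟨hyX, fun hyW => hpar y hyW hyx⟩, fun z hzW hzy => hpar z hzW (htrans z y x hzy hyx)⟩
  · ext x
    constructor
    · intro hxW
      refine ⟨⟨hWX hxW, fun hxQ => hxQ.1.2 hxW⟩, ?_⟩
      rintro y ⟨hyX, hyQ⟩ hyx
      by_cases hyW : y ∈ W
      · exact hanti x hxW y hyW hyx
      · have : ∃ z ∈ W, R z y := by
          by_contra h
          push_neg at h
          exact hyQ ⟨⟨hyX, hyW⟩, h⟩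
        obtain ⟨z, hzW, hzy⟩ := this
        exact hanti x hxW z hzW (htrans z y x hzy hyx)
    · rintro ⟨⟨hxX, hxQ⟩, hmin⟩
      by_contra hxW
      have : ∃ z ∈ W, R z x := by
        by_contra h
        push_neg at h
        exact hxQ ⟨⟨hxX, hxW⟩, h⟩
      obtain ⟨z, hzW, hzx⟩ := this
      exact hmin z ⟨hWX hzW, fun hzQ => hzQ.1.2 hzW⟩ hzx
end

section
/- In the join setup, let R be any one of Y₀, Y₁, Y₂. Then R is transitive if and only if for every z ∈ X the following six implications hold: (a) z R x₁ and x₁ R x₂ imply z R x₂; (b) z R x₂ and x₂ R x₁ imply z R x₁; (c) x₁ R z and z R x₂ imply x₁ R x₂; (d) x₂ R z and z R x₁ imply x₂ R x₁; (e) x₁ R x₂ and x₂ R z imply x₁ R z; (f) x₂ R x₁ and x₁ R z imply x₂ R z. In other words, transitivity of the combined relation need only be checked on triples containing both x₁ and x₂. -/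
/-- In the join setup, for `S` any of `Y₀`, `Y₁`, `Y₂`, the relation `S` is
transitive iff the six implications involving both `x₁` and `x₂` hold for every `z ∈ X`. -/
theorem stmt_8 {E : Type*} (X : Set E) (x₁ x₂ : E)
    (hx : x₁ ≠ x₂) (hx1 : x₁ ∉ X) (hx2 : x₂ ∉ X)
    (R₁ R₂ : E → E → Prop)
    (hdom1 : ∀ a b, R₁ a b → a ∈ X ∪ {x₁} ∧ b ∈ X ∪ {x₁})
    (hirr1 : ∀ a, ¬ R₁ a a)
    (htr1 : ∀ a b c, R₁ a b → R₁ b c → R₁ a c)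
    (hdom2 : ∀ a b, R₂ a b → a ∈ X ∪ {x₂} ∧ b ∈ X ∪ {x₂})
    (hirr2 : ∀ a, ¬ R₂ a a)
    (htr2 : ∀ a b c, R₂ a b → R₂ b c → R₂ a c)
    (hagree : ∀ a ∈ X, ∀ b ∈ X, (R₁ a b ↔ R₂ a b))
    (S : E → E → Prop)
    (hS : (∀ a b, S a b ↔ (R₁ a b ∨ R₂ a b)) ∨
          (∀ a b, S a b ↔ ((R₁ a b ∨ R₂ a b) ∨ (a = x₁ ∧ b = x₂))) ∨
          (∀ a b, S a b ↔ ((R₁ a b ∨ R₂ a b) ∨ (a = x₂ ∧ b = x₁)))) :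
    (∀ a b c, S a b → S b c → S a c) ↔
      ∀ z ∈ X,
        (S z x₁ → S x₁ x₂ → S z x₂) ∧
        (S z x₂ → S x₂ x₁ → S z x₁) ∧
        (S x₁ z → S z x₂ → S x₁ x₂) ∧
        (S x₂ z → S z x₁ → S x₂ x₁) ∧
        (S x₁ x₂ → S x₂ z → S x₁ z) ∧
        (S x₂ x₁ → S x₁ z → S x₂ z) := by
  -- R₁ never touches x₂, R₂ never touches x₁
  have nd1 : ∀ a b, R₁ a b → a ≠ x₂ ∧ b ≠ x₂ := by
    intro a b h
    obtain ⟨ha, hb⟩ := hdom1 a b h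
    constructor
    · rintro rfl
      rcases ha with h' | h'
      · exact hx2 h'
      · exact hx (Set.mem_singleton_iff.mp h').symm
    · rintro rfl
      rcases hb with h' | h'
      · exact hx2 h'
      · exact hx (Set.mem_singleton_iff.mp h').symm
  have nd2 : ∀ a b, R₂ a b → a ≠ x₁ ∧ b ≠ x₁ := by
    intro a b h
    obtain ⟨ha, hb⟩ := hdom2 a b h
    constructor
    · rintro rfl
      rcases ha with h' | h'
      · exact hx1 h'
      · exact hx (Set.mem_singleton_iff.mp h')
    · rintro rfl
      rcases hb with h' | h'
      · exact hx1 h'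
      · exact hx (Set.mem_singleton_iff.mp h')
  have hSmp : ∀ a b, S a b →
      R₁ a b ∨ R₂ a b ∨ (a = x₁ ∧ b = x₂) ∨ (a = x₂ ∧ b = x₁) := by
    intro a b hab
    rcases hS with h | h | h <;> have := (h a b).mp hab <;> tauto
  have hSmpr : ∀ a b, R₁ a b ∨ R₂ a b → S a b := by
    intro a b hab
    rcases hS with h | h | h <;> exact (h a b).mpr (by tauto)
  -- membership
  have hmem : ∀ a b, S a b →
      (a ∈ X ∨ a = x₁ ∨ a = x₂) ∧ (b ∈ X ∨ b = x₁ ∨ b = x₂) := by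
    intro a b hab
    rcases hSmp a b hab with h | h | ⟨rfl, rfl⟩ | ⟨rfl, rfl⟩
    · obtain ⟨ha, hb⟩ := hdom1 a b h
      rcases ha with h' | h' <;> rcases hb with h'' | h'' <;>
        simp_all [Set.mem_singleton_iff]
    · obtain ⟨ha, hb⟩ := hdom2 a b h
      rcases ha with h' | h' <;> rcases hb with h'' | h'' <;>
        simp_all [Set.mem_singleton_iff]
    · tauto
    · tauto
  -- irreflexivity of S
  have Sirr : ∀ a, ¬ S a a := by
    intro a ha
    rcases hSmp a a ha with h | h | ⟨h1, h2⟩ | ⟨h1, h2⟩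
    · exact hirr1 a h
    · exact hirr2 a h
    · exact hx (h1.symm.trans h2)
    · exact hx (h2.symm.trans h1)
  -- S x₁ x₂ and S x₂ x₁ cannot both hold
  have notboth : S x₁ x₂ → S x₂ x₁ → False := by
    intro h1 h2
    rcases hS with h | h | h
    · rcases (h x₁ x₂).mp h1 with h' | h'
      · exact (nd1 _ _ h').2 rfl
      · exact (nd2 _ _ h').1 rfl
    · rcases (h x₂ x₁).mp h2 with (h' | h') | ⟨h', _⟩
      · exact (nd1 _ _ h').1 rfl
      · exact (nd2 _ _ h').2 rfl
      · exact hx h'.symm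
    · rcases (h x₁ x₂).mp h1 with (h' | h') | ⟨h', _⟩
      · exact (nd1 _ _ h').2 rfl
      · exact (nd2 _ _ h').1 rfl
      · exact hx h'
  -- key extraction lemmas
  have key1 : ∀ a b, S a b → a ≠ x₂ → b ≠ x₂ → R₁ a b := by
    intro a b hab ha hb
    rcases hSmp a b hab with h | h | ⟨rfl, rfl⟩ | ⟨rfl, rfl⟩
    · exact h
    · obtain ⟨ha', hb'⟩ := hdom2 a b h
      have haX : a ∈ X := by
        rcases ha' with h' | h'
        · exact h'
        · exact absurd (Set.mem_singleton_iff.mp h') ha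
      have hbX : b ∈ X := by
        rcases hb' with h' | h'
        · exact h'
        · exact absurd (Set.mem_singleton_iff.mp h') hb
      exact (hagree a haX b hbX).mpr h
    · exact absurd rfl hb
    · exact absurd rfl ha
  have key2 : ∀ a b, S a b → a ≠ x₁ → b ≠ x₁ → R₂ a b := by
    intro a b hab ha hb
    rcases hSmp a b hab with h | h | ⟨rfl, rfl⟩ | ⟨rfl, rfl⟩
    · obtain ⟨ha', hb'⟩ := hdom1 a b h
      have haX : a ∈ X := by
        rcases ha' with h' | h'
        · exact h'
        · exact absurd (Set.mem_singleton_iff.mp h') ha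
      have hbX : b ∈ X := by
        rcases hb' with h' | h'
        · exact h'
        · exact absurd (Set.mem_singleton_iff.mp h') hb
      exact (hagree a haX b hbX).mp h
    · exact h
    · exact absurd rfl ha
    · exact absurd rfl hb
  constructor
  · intro htr z _
    exact ⟨fun h1 h2 => htr _ _ _ h1 h2, fun h1 h2 => htr _ _ _ h1 h2,
      fun h1 h2 => htr _ _ _ h1 h2, fun h1 h2 => htr _ _ _ h1 h2,
      fun h1 h2 => htr _ _ _ h1 h2, fun h1 h2 => htr _ _ _ h1 h2⟩
  · intro h6 a b c hab hbc
    have hx1ne2 : x₁ ≠ x₂ := hx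
    rcases (hmem a b hab).2 with hbX | hb1 | hb2
    · -- b ∈ X
      have hb1 : b ≠ x₁ := fun h => hx1 (h ▸ hbX)
      have hb2 : b ≠ x₂ := fun h => hx2 (h ▸ hbX)
      by_cases ha2 : a = x₂
      · subst a
        by_cases hc1 : c = x₁
        · subst c
          exact (h6 b hbX).2.2.2.1 hab hbc
        · exact hSmpr _ _ (Or.inr (htr2 _ _ _
            (key2 _ _ hab hx.symm hb1) (key2 _ _ hbc hb1 hc1)))
      · by_cases hc2 : c = x₂
        · subst c
          by_cases ha1 : a = x₁
          · subst a
            exact (h6 b hbX).2.2.1 hab hbc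
          · exact hSmpr _ _ (Or.inr (htr2 _ _ _
              (key2 _ _ hab ha1 hb1) (key2 _ _ hbc hb1 hx.symm)))
        · exact hSmpr _ _ (Or.inl (htr1 _ _ _
            (key1 _ _ hab ha2 hb2) (key1 _ _ hbc hb2 hc2)))
    · -- b = x₁
      subst b
      by_cases ha2 : a = x₂
      · subst a
        by_cases hc2 : c = x₂
        · subst c
          exact (notboth hbc hab).elim
        · by_cases hc1 : c = x₁
          · subst c
            exact hab
          · have hcX : c ∈ X := by
              rcases (hmem _ _ hbc).2 with h | h | h
              · exact h
              · exact absurd h hc1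
              · exact absurd h hc2
            exact (h6 c hcX).2.2.2.2.2 hab hbc
      · by_cases hc2 : c = x₂
        · subst c
          by_cases ha1 : a = x₁
          · subst a
            exact hbc
          · have haX : a ∈ X := by
              rcases (hmem _ _ hab).1 with h | h | h
              · exact h
              · exact absurd h ha1
              · exact absurd h ha2
            exact (h6 a haX).1 hab hbc
        · exact hSmpr _ _ (Or.inl (htr1 _ _ _
            (key1 _ _ hab ha2 hx) (key1 _ _ hbc hx hc2)))
    · -- b = x₂
      subst b
      by_cases ha1 : a = x₁
      · subst a
        by_cases hc1 : c = x₁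
        · subst c
          exact (notboth hab hbc).elim
        · by_cases hc2 : c = x₂
          · subst c
            exact hab
          · have hcX : c ∈ X := by
              rcases (hmem _ _ hbc).2 with h | h | h
              · exact h
              · exact absurd h hc1
              · exact absurd h hc2
            exact (h6 c hcX).2.2.2.2.1 hab hbc
      · by_cases hc1 : c = x₁
        · subst c
          by_cases ha2 : a = x₂
          · subst a
            exact hbc
          · have haX : a ∈ X := by
              rcases (hmem _ _ hab).1 with h | h | h
              · exact h
              · exact absurd h ha1
              · exact absurd h ha2
            exact (h6 a haX).2.1 hab hbc
        · exact hSmpr _ _ (Or.inr (htr2 _ _ _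
            (key2 _ _ hab ha1 hx.symm) (key2 _ _ hbc hx.symm hc1)))
end

section
/- Let E be a linearly ordered type. Suppose A, B, A', B' are finite subsets of E, each pair satisfying the combining conditions: A and B are nonempty with A \ {max A} = B \ {max B} and max A < max B, and likewise A' \ {max A'} = B' \ {max B'} with max A' < max B'. If A ∪ B = A' ∪ B', then A = A' and B = B'. (The union of a combinable pair of episodes' event-type sets uniquely determines the pair.) -/
lemma stmt9_maxU {E : Type*} [LinearOrder E] (A B : Finset E)
    (hA : A.Nonempty) (hB : B.Nonempty)
    (h1 : A.erase (A.max' hA) = B.erase (B.max' hB))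
    (h2 : A.max' hA < B.max' hB) :
    (A ∪ B).max' (hA.mono Finset.subset_union_left) = B.max' hB := by
  apply le_antisymm
  · apply Finset.max'_le
    intro x hx
    rcases Finset.mem_union.1 hx with hxA | hxB
    · rcases eq_or_ne x (A.max' hA) with rfl | hne
      · exact le_of_lt h2
      · have : x ∈ B.erase (B.max' hB) := h1 ▸ Finset.mem_erase.2 ⟨hne, hxA⟩
        exact Finset.le_max' _ _ (Finset.mem_of_mem_erase this)
    · exact Finset.le_max' _ _ hxB
  · exact Finset.le_max' _ _ (Finset.mem_union_right _ (B.max'_mem hB))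

lemma stmt9_A {E : Type*} [LinearOrder E] (A B : Finset E)
    (hA : A.Nonempty) (hB : B.Nonempty)
    (h1 : A.erase (A.max' hA) = B.erase (B.max' hB))
    (h2 : A.max' hA < B.max' hB) :
    (A ∪ B).erase ((A ∪ B).max' (hA.mono Finset.subset_union_left)) = A := by
  rw [stmt9_maxU A B hA hB h1 h2]
  ext x
  simp only [Finset.mem_erase, Finset.mem_union]
  constructor
  · rintro ⟨hne, hxA | hxB⟩
    · exact hxA
    · exact Finset.mem_of_mem_erase (h1 ▸ Finset.mem_erase.2 ⟨hne, hxB⟩)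
  · intro hxA
    exact ⟨ne_of_lt (lt_of_le_of_lt (Finset.le_max' _ _ hxA) h2), Or.inl hxA⟩

lemma stmt9_B {E : Type*} [LinearOrder E] (A B : Finset E)
    (hA : A.Nonempty) (hB : B.Nonempty)
    (h1 : A.erase (A.max' hA) = B.erase (B.max' hB))
    (h2 : A.max' hA < B.max' hB) :
    (A ∪ B).erase (A.max' hA) = B := by
  have hmaxA_notB : A.max' hA ∉ B := by
    intro hmem
    have : A.max' hA ∈ B.erase (B.max' hB) :=
      Finset.mem_erase.2 ⟨ne_of_lt h2, hmem⟩
    rw [← h1] at this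
    exact (Finset.mem_erase.1 this).1 rfl
  ext x
  simp only [Finset.mem_erase, Finset.mem_union]
  constructor
  · rintro ⟨hne, hxA | hxB⟩
    · exact Finset.mem_of_mem_erase (h1 ▸ Finset.mem_erase.2 ⟨hne, hxA⟩)
    · exact hxB
  · intro hxB
    exact ⟨fun h => hmaxA_notB (h ▸ hxB), Or.inr hxB⟩

/-- The union of a combinable pair of episodes' event-type sets uniquely
determines the pair. -/
theorem stmt_9 {E : Type*} [LinearOrder E]
    (A B A' B' : Finset E)
    (hA : A.Nonempty) (hB : B.Nonempty) (hA' : A'.Nonempty) (hB' : B'.Nonempty)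
    (h1 : A.erase (A.max' hA) = B.erase (B.max' hB))
    (h2 : A.max' hA < B.max' hB)
    (h1' : A'.erase (A'.max' hA') = B'.erase (B'.max' hB'))
    (h2' : A'.max' hA' < B'.max' hB')
    (hU : A ∪ B = A' ∪ B') :
    A = A' ∧ B = B' := by
  have hAeq : A = A' := by
    rw [← stmt9_A A B hA hB h1 h2, ← stmt9_A A' B' hA' hB' h1' h2']
    congr 1
    exact le_antisymm (Finset.max'_subset _ hU.le) (Finset.max'_subset _ hU.ge)
  subst hAeq
  refine ⟨rfl, ?_⟩
  rw [← stmt9_B A B hA hB h1 h2, ← stmt9_B A B' hA hB' h1' h2', hU]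
end

section
/- In the join setup, let R₁' and R₂' also be strict partial orders on X ∪ {x₁} and X ∪ {x₂} respectively, with the restrictions of R₁' and R₂' to X coinciding. For r, s ∈ {0,1,2}, let Y_r denote the r-th combination of (R₁, R₂) and Y'_s the s-th combination of (R₁', R₂') (where combination 0 is the union, combination 1 additionally contains (x₁,x₂), and combination 2 additionally contains (x₂,x₁)). If Y_r = Y'_s, then r = s, R₁ = R₁', and R₂ = R₂'. (Every candidate partial order is generated exactly once by the candidate generation algorithm.) -/
lemma stmt_10_mem {E : Type*} (X : Set E) (x₁ x₂ : E) (hx : x₁ ≠ x₂) {a : E}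
    (h1 : a ∈ X ∪ {x₁}) (h2 : a ∈ X ∪ {x₂}) : a ∈ X := by
  rcases h1 with h | h
  · exact h
  · rcases h2 with h' | h'
    · exact h'
    · exact absurd ((Set.mem_singleton_iff.1 h).symm.trans
        (Set.mem_singleton_iff.1 h')) hx

lemma stmt_10_aux {E : Type*} (X : Set E) (x₁ x₂ : E)
    (hx : x₁ ≠ x₂) (hx2 : x₂ ∉ X)
    (R₁ R₁' R₂' : E → E → Prop)
    (hdom1 : ∀ a b, R₁ a b → a ∈ X ∪ {x₁} ∧ b ∈ X ∪ {x₁})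
    (hdom2' : ∀ a b, R₂' a b → a ∈ X ∪ {x₂} ∧ b ∈ X ∪ {x₂})
    (hagree' : ∀ a ∈ X, ∀ b ∈ X, (R₁' a b ↔ R₂' a b))
    (h : ∀ a b, R₁ a b →
      (R₁' a b ∨ R₂' a b ∨ (a = x₁ ∧ b = x₂) ∨ (a = x₂ ∧ b = x₁))) :
    ∀ a b, R₁ a b → R₁' a b := by
  intro a b hab
  obtain ⟨ha, hb⟩ := hdom1 a b hab
  rcases h a b hab with h1 | h2 | ⟨rfl, rfl⟩ | ⟨rfl, rfl⟩
  · exact h1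
  · obtain ⟨ha2, hb2⟩ := hdom2' a b h2
    exact (hagree' a (stmt_10_mem X x₁ x₂ hx ha ha2)
      b (stmt_10_mem X x₁ x₂ hx hb hb2)).2 h2
  · exact absurd hb (by simp [hx2, Ne.symm hx])
  · exact absurd ha (by simp [hx2, Ne.symm hx])

/-- Every candidate partial order is generated exactly once: if the `r`-th
combination of `(R₁, R₂)` coincides with the `s`-th combination of `(R₁', R₂')`, then
`r = s`, `R₁ = R₁'` and `R₂ = R₂'`. -/
theorem stmt_10 {E : Type*} (X : Set E) (x₁ x₂ : E)
    (hx : x₁ ≠ x₂) (hx1 : x₁ ∉ X) (hx2 : x₂ ∉ X)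
    (R₁ R₂ R₁' R₂' : E → E → Prop)
    (hdom1 : ∀ a b, R₁ a b → a ∈ X ∪ {x₁} ∧ b ∈ X ∪ {x₁})
    (hirr1 : ∀ a, ¬ R₁ a a)
    (htr1 : ∀ a b c, R₁ a b → R₁ b c → R₁ a c)
    (hdom2 : ∀ a b, R₂ a b → a ∈ X ∪ {x₂} ∧ b ∈ X ∪ {x₂})
    (hirr2 : ∀ a, ¬ R₂ a a)
    (htr2 : ∀ a b c, R₂ a b → R₂ b c → R₂ a c)
    (hagree : ∀ a ∈ X, ∀ b ∈ X, (R₁ a b ↔ R₂ a b))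
    (hdom1' : ∀ a b, R₁' a b → a ∈ X ∪ {x₁} ∧ b ∈ X ∪ {x₁})
    (hirr1' : ∀ a, ¬ R₁' a a)
    (htr1' : ∀ a b c, R₁' a b → R₁' b c → R₁' a c)
    (hdom2' : ∀ a b, R₂' a b → a ∈ X ∪ {x₂} ∧ b ∈ X ∪ {x₂})
    (hirr2' : ∀ a, ¬ R₂' a a)
    (htr2' : ∀ a b c, R₂' a b → R₂' b c → R₂' a c)
    (hagree' : ∀ a ∈ X, ∀ b ∈ X, (R₁' a b ↔ R₂' a b))
    (r s : Fin 3)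
    (heq : ∀ a b,
      (R₁ a b ∨ R₂ a b ∨ ((r : ℕ) = 1 ∧ a = x₁ ∧ b = x₂) ∨
        ((r : ℕ) = 2 ∧ a = x₂ ∧ b = x₁)) ↔
      (R₁' a b ∨ R₂' a b ∨ ((s : ℕ) = 1 ∧ a = x₁ ∧ b = x₂) ∨
        ((s : ℕ) = 2 ∧ a = x₂ ∧ b = x₁))) :
    r = s ∧ (∀ a b, R₁ a b ↔ R₁' a b) ∧ (∀ a b, R₂ a b ↔ R₂' a b) := by
  -- basic non-membership facts
  have hnR1 : ∀ a b, R₁ a b → a ≠ x₂ ∧ b ≠ x₂ := by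
    intro a b h
    obtain ⟨ha, hb⟩ := hdom1 a b h
    constructor <;> rintro rfl <;> simp [hx2, Ne.symm hx] at ha hb
  have hnR2 : ∀ a b, R₂ a b → a ≠ x₁ ∧ b ≠ x₁ := by
    intro a b h
    obtain ⟨ha, hb⟩ := hdom2 a b h
    constructor <;> rintro rfl <;> simp [hx1, hx] at ha hb
  have hnR1' : ∀ a b, R₁' a b → a ≠ x₂ ∧ b ≠ x₂ := by
    intro a b h
    obtain ⟨ha, hb⟩ := hdom1' a b h
    constructor <;> rintro rfl <;> simp [hx2, Ne.symm hx] at ha hb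
  have hnR2' : ∀ a b, R₂' a b → a ≠ x₁ ∧ b ≠ x₁ := by
    intro a b h
    obtain ⟨ha, hb⟩ := hdom2' a b h
    constructor <;> rintro rfl <;> simp [hx1, hx] at ha hb
  have hrs : r = s := by
    have h12 := heq x₁ x₂
    have h21 := heq x₂ x₁
    have e1 : (r : ℕ) = 1 ↔ (s : ℕ) = 1 := by
      constructor
      · intro h
        rcases h12.1 (Or.inr (Or.inr (Or.inl ⟨h, rfl, rfl⟩))) with h' | h' | h' | h'
        · exact absurd rfl (hnR1' _ _ h').2
        · exact absurd rfl (hnR2' _ _ h').1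
        · exact h'.1
        · exact absurd h'.2.1 hx
      · intro h
        rcases h12.2 (Or.inr (Or.inr (Or.inl ⟨h, rfl, rfl⟩))) with h' | h' | h' | h'
        · exact absurd rfl (hnR1 _ _ h').2
        · exact absurd rfl (hnR2 _ _ h').1
        · exact h'.1
        · exact absurd h'.2.1 hx
    have e2 : (r : ℕ) = 2 ↔ (s : ℕ) = 2 := by
      constructor
      · intro h
        rcases h21.1 (Or.inr (Or.inr (Or.inr ⟨h, rfl, rfl⟩))) with h' | h' | h' | h'
        · exact absurd rfl (hnR1' _ _ h').1
        · exact absurd rfl (hnR2' _ _ h').2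
        · exact absurd h'.2.1 hx.symm
        · exact h'.1
      · intro h
        rcases h21.2 (Or.inr (Or.inr (Or.inr ⟨h, rfl, rfl⟩))) with h' | h' | h' | h'
        · exact absurd rfl (hnR1 _ _ h').1
        · exact absurd rfl (hnR2 _ _ h').2
        · exact absurd h'.2.1 hx.symm
        · exact h'.1
    have hr := r.isLt
    have hs := s.isLt
    apply Fin.ext
    omega
  refine ⟨hrs, ?_, ?_⟩
  · intro a b
    constructor
    · refine stmt_10_aux X x₁ x₂ hx hx2 R₁ R₁' R₂' hdom1 hdom2' hagree' ?_ a b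
      intro a b h
      rcases (heq a b).1 (Or.inl h) with h' | h' | h' | h'
      · exact Or.inl h'
      · exact Or.inr (Or.inl h')
      · exact Or.inr (Or.inr (Or.inl h'.2))
      · exact Or.inr (Or.inr (Or.inr h'.2))
    · refine stmt_10_aux X x₁ x₂ hx hx2 R₁' R₁ R₂ hdom1' hdom2 hagree ?_ a b
      intro a b h
      rcases (heq a b).2 (Or.inl h) with h' | h' | h' | h'
      · exact Or.inl h'
      · exact Or.inr (Or.inl h')
      · exact Or.inr (Or.inr (Or.inl h'.2))
      · exact Or.inr (Or.inr (Or.inr h'.2))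
  · intro a b
    constructor
    · refine stmt_10_aux X x₂ x₁ hx.symm hx1 R₂ R₂' R₁'
        hdom2 hdom1' (fun a ha b hb => (hagree' a ha b hb).symm) ?_ a b
      intro a b h
      rcases (heq a b).1 (Or.inr (Or.inl h)) with h' | h' | h' | h'
      · exact Or.inr (Or.inl h')
      · exact Or.inl h'
      · exact Or.inr (Or.inr (Or.inr h'.2))
      · exact Or.inr (Or.inr (Or.inl h'.2))
    · refine stmt_10_aux X x₂ x₁ hx.symm hx1 R₂' R₂ R₁
        hdom2' hdom1 (fun a ha b hb => (hagree a ha b hb).symm) ?_ a b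
      intro a b h
      rcases (heq a b).2 (Or.inr (Or.inl h)) with h' | h' | h' | h'
      · exact Or.inr (Or.inl h')
      · exact Or.inl h'
      · exact Or.inr (Or.inr (Or.inr h'.2))
      · exact Or.inr (Or.inr (Or.inl h'.2))
end

section
/- In the join setup, suppose there exists z₀ ∈ X of type (1) (i.e. (x₁,z₀) ∈ R₁ and (z₀,x₂) ∈ R₂). Then there exists no z ∈ X of type (1'), no z ∈ X of type (2'), and no z ∈ X of type (3). Symmetrically, if there exists a node of type (1'), then there exist no nodes of type (1), type (2), or type (3'). -/
/-- In the join setup, if a node of type (1) exists then no node of type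
(1'), (2') or (3) exists; symmetrically, if a node of type (1') exists then no node of
type (1), (2) or (3') exists. -/
theorem stmt_12 {E : Type*} (X : Set E) (x₁ x₂ : E)
    (hx : x₁ ≠ x₂) (hx1 : x₁ ∉ X) (hx2 : x₂ ∉ X)
    (R₁ R₂ : E → E → Prop)
    (hdom1 : ∀ a b, R₁ a b → a ∈ X ∪ {x₁} ∧ b ∈ X ∪ {x₁})
    (hirr1 : ∀ a, ¬ R₁ a a)
    (htr1 : ∀ a b c, R₁ a b → R₁ b c → R₁ a c)
    (hdom2 : ∀ a b, R₂ a b → a ∈ X ∪ {x₂} ∧ b ∈ X ∪ {x₂})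
    (hirr2 : ∀ a, ¬ R₂ a a)
    (htr2 : ∀ a b c, R₂ a b → R₂ b c → R₂ a c)
    (hagree : ∀ a ∈ X, ∀ b ∈ X, (R₁ a b ↔ R₂ a b)) :
    ((∃ z₀ ∈ X, R₁ x₁ z₀ ∧ R₂ z₀ x₂) →
      (¬ ∃ z ∈ X, R₁ z x₁ ∧ R₂ x₂ z) ∧
      (¬ ∃ z ∈ X, R₁ z x₁ ∧ ¬ R₂ z x₂ ∧ ¬ R₂ x₂ z) ∧
      (¬ ∃ z ∈ X, R₂ x₂ z ∧ ¬ R₁ z x₁ ∧ ¬ R₁ x₁ z)) ∧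
    ((∃ z₀ ∈ X, R₁ z₀ x₁ ∧ R₂ x₂ z₀) →
      (¬ ∃ z ∈ X, R₁ x₁ z ∧ R₂ z x₂) ∧
      (¬ ∃ z ∈ X, R₁ x₁ z ∧ ¬ R₂ z x₂ ∧ ¬ R₂ x₂ z) ∧
      (¬ ∃ z ∈ X, R₂ z x₂ ∧ ¬ R₁ z x₁ ∧ ¬ R₁ x₁ z)) := by
  constructor
  · rintro ⟨z₀, hz₀X, h1, h2⟩
    refine ⟨?_, ?_, ?_⟩
    · rintro ⟨z, hzX, hz1, hz2⟩
      have h12 : R₁ z z₀ := htr1 _ _ _ hz1 h1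
      have h22 : R₂ z z₀ := (hagree z hzX z₀ hz₀X).1 h12
      exact hirr2 x₂ (htr2 _ _ _ (htr2 _ _ _ hz2 h22) h2)
    · rintro ⟨z, hzX, hz1, hz2, _⟩
      have h12 : R₁ z z₀ := htr1 _ _ _ hz1 h1
      have h22 : R₂ z z₀ := (hagree z hzX z₀ hz₀X).1 h12
      exact hz2 (htr2 _ _ _ h22 h2)
    · rintro ⟨z, hzX, hz2, _, hz1⟩
      have h22 : R₂ z₀ z := htr2 _ _ _ h2 hz2
      have h12 : R₁ z₀ z := (hagree z₀ hz₀X z hzX).2 h22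
      exact hz1 (htr1 _ _ _ h1 h12)
  · rintro ⟨z₀, hz₀X, h1, h2⟩
    refine ⟨?_, ?_, ?_⟩
    · rintro ⟨z, hzX, hz1, hz2⟩
      have h12 : R₁ z₀ z := htr1 _ _ _ h1 hz1
      have h22 : R₂ z₀ z := (hagree z₀ hz₀X z hzX).1 h12
      exact hirr2 x₂ (htr2 _ _ _ (htr2 _ _ _ h2 h22) hz2)
    · rintro ⟨z, hzX, hz1, _, hz2⟩
      have h12 : R₁ z₀ z := htr1 _ _ _ h1 hz1
      have h22 : R₂ z₀ z := (hagree z₀ hz₀X z hzX).1 h12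
      exact hz2 (htr2 _ _ _ h2 h22)
    · rintro ⟨z, hzX, hz2, hz1, _⟩
      have h22 : R₂ z z₀ := htr2 _ _ _ hz2 h2
      have h12 : R₁ z z₀ := (hagree z hzX z₀ hz₀X).2 h22
      exact hz1 (htr1 _ _ _ h12 h1)
end

section
/- In the join setup, suppose there exists a node z₀ ∈ X of type (1) (i.e. (x₁,z₀) ∈ R₁ and (z₀,x₂) ∈ R₂). Then Y₀ = R₁ ∪ R₂ is not transitive, Y₂ = Y₀ ∪ {(x₂,x₁)} is not transitive, and Y₁ = Y₀ ∪ {(x₁,x₂)} is transitive (hence a strict partial order, being also irreflexive and asymmetric). -/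
/-- In the join setup, if a node of type (1) exists then `Y₀` and `Y₂` are
not transitive while `Y₁` is transitive (hence a strict partial order, being also
irreflexive and asymmetric). -/
theorem stmt_13 {E : Type*} (X : Set E) (x₁ x₂ : E)
    (hx : x₁ ≠ x₂) (hx1 : x₁ ∉ X) (hx2 : x₂ ∉ X)
    (R₁ R₂ : E → E → Prop)
    (hdom1 : ∀ a b, R₁ a b → a ∈ X ∪ {x₁} ∧ b ∈ X ∪ {x₁})
    (hirr1 : ∀ a, ¬ R₁ a a)
    (htr1 : ∀ a b c, R₁ a b → R₁ b c → R₁ a c)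
    (hdom2 : ∀ a b, R₂ a b → a ∈ X ∪ {x₂} ∧ b ∈ X ∪ {x₂})
    (hirr2 : ∀ a, ¬ R₂ a a)
    (htr2 : ∀ a b c, R₂ a b → R₂ b c → R₂ a c)
    (hagree : ∀ a ∈ X, ∀ b ∈ X, (R₁ a b ↔ R₂ a b))
    (z₀ : E) (hz₀ : z₀ ∈ X) (hz₀1 : R₁ x₁ z₀) (hz₀2 : R₂ z₀ x₂) :
    ¬ (∀ a b c, (R₁ a b ∨ R₂ a b) → (R₁ b c ∨ R₂ b c) → (R₁ a c ∨ R₂ a c)) ∧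
    ¬ (∀ a b c, ((R₁ a b ∨ R₂ a b) ∨ (a = x₂ ∧ b = x₁)) →
        ((R₁ b c ∨ R₂ b c) ∨ (b = x₂ ∧ c = x₁)) →
        ((R₁ a c ∨ R₂ a c) ∨ (a = x₂ ∧ c = x₁))) ∧
    (∀ a b c, ((R₁ a b ∨ R₂ a b) ∨ (a = x₁ ∧ b = x₂)) →
        ((R₁ b c ∨ R₂ b c) ∨ (b = x₁ ∧ c = x₂)) →
        ((R₁ a c ∨ R₂ a c) ∨ (a = x₁ ∧ c = x₂))) ∧
    (∀ a, ¬ ((R₁ a a ∨ R₂ a a) ∨ (a = x₁ ∧ a = x₂))) ∧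
    (∀ a b, ((R₁ a b ∨ R₂ a b) ∨ (a = x₁ ∧ b = x₂)) →
        ¬ ((R₁ b a ∨ R₂ b a) ∨ (b = x₁ ∧ a = x₂))) := by
  -- membership helpers
  have hX1 : ∀ {a b}, R₁ a b → (a = x₁ ∨ a ∈ X) ∧ (b = x₁ ∨ b ∈ X) := by
    intro a b h
    obtain ⟨ha, hb⟩ := hdom1 a b h
    simp only [Set.mem_union, Set.mem_singleton_iff] at ha hb
    tauto
  have hX2 : ∀ {a b}, R₂ a b → (a = x₂ ∨ a ∈ X) ∧ (b = x₂ ∨ b ∈ X) := by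
    intro a b h
    obtain ⟨ha, hb⟩ := hdom2 a b h
    simp only [Set.mem_union, Set.mem_singleton_iff] at ha hb
    tauto
  have hn1 : ∀ {a b}, R₂ a b → a ≠ x₁ ∧ b ≠ x₁ := by
    intro a b h
    obtain ⟨ha, hb⟩ := hX2 h
    constructor <;> rintro rfl <;> [rcases ha with h' | h'; rcases hb with h' | h'] <;>
      first | exact hx h' | exact hx1 h'
  have hn2 : ∀ {a b}, R₁ a b → a ≠ x₂ ∧ b ≠ x₂ := by
    intro a b h
    obtain ⟨ha, hb⟩ := hX1 h
    constructor <;> rintro rfl <;> [rcases ha with h' | h'; rcases hb with h' | h'] <;>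
      first | exact hx h'.symm | exact hx2 h'
  -- conversions on X
  have cv12 : ∀ {a b}, a ∈ X → b ∈ X → R₁ a b → R₂ a b := fun ha hb h =>
    (hagree _ ha _ hb).mp h
  have cv21 : ∀ {a b}, a ∈ X → b ∈ X → R₂ a b → R₁ a b := fun ha hb h =>
    (hagree _ ha _ hb).mpr h
  -- key transfer lemmas via z₀
  have key1 : ∀ {c}, R₂ x₂ c → R₁ x₁ c := by
    intro c h
    have hc : c ∈ X := by
      rcases (hX2 h).2 with rfl | hc
      · exact absurd h (hirr2 c)
      · exact hc
    exact htr1 _ _ _ hz₀1 (cv21 hz₀ hc (htr2 _ _ _ hz₀2 h))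
  have key2 : ∀ {a}, R₁ a x₁ → R₂ a x₂ := by
    intro a h
    have ha : a ∈ X := by
      rcases (hX1 h).1 with rfl | ha
      · exact absurd h (hirr1 a)
      · exact ha
    exact htr2 _ _ _ (cv12 ha hz₀ (htr1 _ _ _ h hz₀1)) hz₀2
  have noR1 : ¬ R₁ x₁ x₂ := fun h => (hn2 h).2 rfl
  have noR2 : ¬ R₂ x₁ x₂ := fun h => (hn1 h).1 rfl
  -- transitivity of Y₁
  have trY1 : ∀ a b c, ((R₁ a b ∨ R₂ a b) ∨ (a = x₁ ∧ b = x₂)) →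
      ((R₁ b c ∨ R₂ b c) ∨ (b = x₁ ∧ c = x₂)) →
      ((R₁ a c ∨ R₂ a c) ∨ (a = x₁ ∧ c = x₂)) := by
    intro a b c hab hbc
    rcases hab with (h1 | h2) | ⟨rfl, rfl⟩
    · -- R₁ a b
      rcases hbc with (g1 | g2) | ⟨rfl, rfl⟩
      · exact Or.inl (Or.inl (htr1 _ _ _ h1 g1))
      · -- R₁ a b, R₂ b c
        have hbX : b ∈ X := by
          rcases (hX1 h1).2 with rfl | hb
          · exact absurd rfl (hn1 g2).1
          · exact hb
        rcases (hX2 g2).2 with rfl | hcX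
        · rcases (hX1 h1).1 with rfl | haX
          · exact Or.inr ⟨rfl, rfl⟩
          · exact Or.inl (Or.inr (htr2 _ _ _ (cv12 haX hbX h1) g2))
        · exact Or.inl (Or.inl (htr1 _ _ _ h1 (cv21 hbX hcX g2)))
      · exact Or.inl (Or.inr (key2 h1))
    · -- R₂ a b
      rcases hbc with (g1 | g2) | ⟨rfl, rfl⟩
      · -- R₂ a b, R₁ b c
        have hbX : b ∈ X := by
          rcases (hX1 g1).1 with rfl | hb
          · exact absurd rfl (hn1 h2).2
          · exact hb
        rcases (hX2 h2).1 with rfl | haX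
        · rcases (hX1 g1).2 with rfl | hcX
          · exact absurd (htr1 _ _ _ (key1 h2) g1) (hirr1 _)
          · exact Or.inl (Or.inr (htr2 _ _ _ h2 (cv12 hbX hcX g1)))
        · rcases (hX1 g1).2 with rfl | hcX
          · exact Or.inl (Or.inl (htr1 _ _ _ (cv21 haX hbX h2) g1))
          · exact Or.inl (Or.inl (htr1 _ _ _ (cv21 haX hbX h2) g1))
      · exact Or.inl (Or.inr (htr2 _ _ _ h2 g2))
      · exact absurd rfl (hn1 h2).2
    · -- a = x₁, b = x₂
      rcases hbc with (g1 | g2) | ⟨rfl, rfl⟩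
      · exact absurd rfl (hn2 g1).1
      · exact Or.inl (Or.inl (key1 g2))
      · exact absurd rfl hx
  have irrY1 : ∀ a, ¬ ((R₁ a a ∨ R₂ a a) ∨ (a = x₁ ∧ a = x₂)) := by
    intro a h
    rcases h with (h | h) | ⟨rfl, h⟩
    · exact hirr1 a h
    · exact hirr2 a h
    · exact hx h
  refine ⟨?_, ?_, trY1, irrY1, ?_⟩
  · intro h
    rcases h x₁ z₀ x₂ (Or.inl hz₀1) (Or.inr hz₀2) with h' | h'
    · exact noR1 h'
    · exact noR2 h'
  · intro h
    rcases h x₁ z₀ x₂ (Or.inl (Or.inl hz₀1)) (Or.inl (Or.inr hz₀2)) with (h' | h') | ⟨h', _⟩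
    · exact noR1 h'
    · exact noR2 h'
    · exact hx (h' ▸ rfl)
  · intro a b hab hba
    exact irrY1 a (trY1 a b a hab hba)
end

section
/- In the join setup, suppose there exists a node z₀ ∈ X of type (1') (i.e. (z₀,x₁) ∈ R₁ and (x₂,z₀) ∈ R₂). Then Y₀ = R₁ ∪ R₂ is not transitive, Y₁ = Y₀ ∪ {(x₁,x₂)} is not transitive, and Y₂ = Y₀ ∪ {(x₂,x₁)} is transitive (hence a strict partial order, being also irreflexive and asymmetric). -/
/-- In the join setup, if a node of type (1') exists then `Y₀` and `Y₁` are
not transitive while `Y₂` is transitive (hence a strict partial order, being also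
irreflexive and asymmetric). -/
theorem stmt_14 {E : Type*} (X : Set E) (x₁ x₂ : E)
    (hx : x₁ ≠ x₂) (hx1 : x₁ ∉ X) (hx2 : x₂ ∉ X)
    (R₁ R₂ : E → E → Prop)
    (hdom1 : ∀ a b, R₁ a b → a ∈ X ∪ {x₁} ∧ b ∈ X ∪ {x₁})
    (hirr1 : ∀ a, ¬ R₁ a a)
    (htr1 : ∀ a b c, R₁ a b → R₁ b c → R₁ a c)
    (hdom2 : ∀ a b, R₂ a b → a ∈ X ∪ {x₂} ∧ b ∈ X ∪ {x₂})
    (hirr2 : ∀ a, ¬ R₂ a a)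
    (htr2 : ∀ a b c, R₂ a b → R₂ b c → R₂ a c)
    (hagree : ∀ a ∈ X, ∀ b ∈ X, (R₁ a b ↔ R₂ a b))
    (z₀ : E) (hz₀ : z₀ ∈ X) (hz₀1 : R₁ z₀ x₁) (hz₀2 : R₂ x₂ z₀) :
    ¬ (∀ a b c, (R₁ a b ∨ R₂ a b) → (R₁ b c ∨ R₂ b c) → (R₁ a c ∨ R₂ a c)) ∧
    ¬ (∀ a b c, ((R₁ a b ∨ R₂ a b) ∨ (a = x₁ ∧ b = x₂)) →
        ((R₁ b c ∨ R₂ b c) ∨ (b = x₁ ∧ c = x₂)) →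
        ((R₁ a c ∨ R₂ a c) ∨ (a = x₁ ∧ c = x₂))) ∧
    (∀ a b c, ((R₁ a b ∨ R₂ a b) ∨ (a = x₂ ∧ b = x₁)) →
        ((R₁ b c ∨ R₂ b c) ∨ (b = x₂ ∧ c = x₁)) →
        ((R₁ a c ∨ R₂ a c) ∨ (a = x₂ ∧ c = x₁))) ∧
    (∀ a, ¬ ((R₁ a a ∨ R₂ a a) ∨ (a = x₂ ∧ a = x₁))) ∧
    (∀ a b, ((R₁ a b ∨ R₂ a b) ∨ (a = x₂ ∧ b = x₁)) →
        ¬ ((R₁ b a ∨ R₂ b a) ∨ (b = x₂ ∧ a = x₁))) := by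
  -- membership helpers
  have hmem1 : ∀ a b, R₁ a b → a ≠ x₂ ∧ b ≠ x₂ := by
    intro a b h
    obtain ⟨ha, hb⟩ := hdom1 a b h
    constructor <;> rintro rfl
    · rcases ha with h' | h'
      · exact hx2 h'
      · exact hx h'.symm
    · rcases hb with h' | h'
      · exact hx2 h'
      · exact hx h'.symm
  have hmem2 : ∀ a b, R₂ a b → a ≠ x₁ ∧ b ≠ x₁ := by
    intro a b h
    obtain ⟨ha, hb⟩ := hdom2 a b h
    constructor <;> rintro rfl
    · rcases ha with h' | h'
      · exact hx1 h'
      · exact hx h'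
    · rcases hb with h' | h'
      · exact hx1 h'
      · exact hx h'
  have hX1 : ∀ a b, R₁ a b → b ≠ x₁ → b ∈ X := by
    intro a b h hbn
    rcases (hdom1 a b h).2 with h' | h'
    · exact h'
    · exact absurd h' hbn
  have hX1' : ∀ a b, R₁ a b → a ≠ x₁ → a ∈ X := by
    intro a b h hbn
    rcases (hdom1 a b h).1 with h' | h'
    · exact h'
    · exact absurd h' hbn
  have hX2 : ∀ a b, R₂ a b → b ≠ x₂ → b ∈ X := by
    intro a b h hbn
    rcases (hdom2 a b h).2 with h' | h'
    · exact h'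
    · exact absurd h' hbn
  have hX2' : ∀ a b, R₂ a b → a ≠ x₂ → a ∈ X := by
    intro a b h hbn
    rcases (hdom2 a b h).1 with h' | h'
    · exact h'
    · exact absurd h' hbn
  -- no node of type (1)
  have hno1 : ∀ b, R₁ x₁ b → R₂ b x₂ → False := by
    intro b hb1 hb2
    have hbX : b ∈ X := hX2' b x₂ hb2 (hmem1 x₁ b hb1).2
    have h1 : R₁ z₀ b := htr1 _ _ _ hz₀1 hb1
    have h2 : R₂ b z₀ := htr2 _ _ _ hb2 hz₀2
    have h3 : R₁ b z₀ := (hagree b hbX z₀ hz₀).2 h2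
    exact hirr1 z₀ (htr1 _ _ _ h1 h3)
  have htrY : ∀ a b c, ((R₁ a b ∨ R₂ a b) ∨ (a = x₂ ∧ b = x₁)) →
        ((R₁ b c ∨ R₂ b c) ∨ (b = x₂ ∧ c = x₁)) →
        ((R₁ a c ∨ R₂ a c) ∨ (a = x₂ ∧ c = x₁)) := by
    intro a b c hab hbc
    rcases hab with hab | ⟨ha', hb'⟩
    · rcases hbc with hbc | ⟨hb', hc'⟩
      · -- both in Y₀
        rcases hab with hab | hab <;> rcases hbc with hbc | hbc
        · exact Or.inl (Or.inl (htr1 _ _ _ hab hbc))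
        · -- R₁ a b, R₂ b c : b ∈ X
          have hbX : b ∈ X := hX1 a b hab (hmem2 b c hbc).1
          by_cases ha : a = x₁
          · subst ha
            by_cases hc : c = x₂
            · subst hc; exact absurd (hno1 b hab hbc) (fun h => h)
            · have hcX : c ∈ X := hX2 b c hbc hc
              exact Or.inl (Or.inl (htr1 _ _ _ hab ((hagree b hbX c hcX).2 hbc)))
          · have haX : a ∈ X := hX1' a b hab ha
            exact Or.inl (Or.inr (htr2 _ _ _ ((hagree a haX b hbX).1 hab) hbc))
        · -- R₂ a b, R₁ b c : b ∈ X
          have hbX : b ∈ X := hX2 a b hab (hmem1 b c hbc).1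
          by_cases ha : a = x₂
          · subst ha
            by_cases hc : c = x₁
            · subst hc; exact Or.inr ⟨rfl, rfl⟩
            · have hcX : c ∈ X := hX1 b c hbc hc
              exact Or.inl (Or.inr (htr2 _ _ _ hab ((hagree b hbX c hcX).1 hbc)))
          · have haX : a ∈ X := hX2' a b hab ha
            exact Or.inl (Or.inl (htr1 _ _ _ ((hagree a haX b hbX).2 hab) hbc))
        · exact Or.inl (Or.inr (htr2 _ _ _ hab hbc))
      · -- b = x₂, c = x₁
        subst b; subst c
        have hab2 : R₂ a x₂ := by
          rcases hab with h | h
          · exact absurd rfl (hmem1 _ _ h).2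
          · exact h
        have haX : a ∈ X := hX2' a x₂ hab2 (fun h => hirr2 x₂ (h ▸ hab2))
        have h1 : R₂ a z₀ := htr2 _ _ _ hab2 hz₀2
        have h2 : R₁ a z₀ := (hagree a haX z₀ hz₀).2 h1
        exact Or.inl (Or.inl (htr1 _ _ _ h2 hz₀1))
    · -- a = x₂, b = x₁
      subst a; subst b
      have hbc1 : R₁ x₁ c := by
        rcases hbc with (h | h) | hbc
        · exact h
        · exact absurd rfl (hmem2 _ _ h).1
        · exact absurd hbc.1 (fun h' => hx h')
      have hcX : c ∈ X := hX1 x₁ c hbc1 (fun h => hirr1 x₁ (h ▸ hbc1))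
      have h1 : R₁ z₀ c := htr1 _ _ _ hz₀1 hbc1
      have h2 : R₂ z₀ c := (hagree z₀ hz₀ c hcX).1 h1
      exact Or.inl (Or.inr (htr2 _ _ _ hz₀2 h2))
  have hirrY : ∀ a, ¬ ((R₁ a a ∨ R₂ a a) ∨ (a = x₂ ∧ a = x₁)) := by
    rintro a ((h | h) | ⟨rfl, h⟩)
    · exact hirr1 a h
    · exact hirr2 a h
    · exact hx h.symm
  refine ⟨?_, ?_, htrY, hirrY, ?_⟩
  · intro h
    rcases h x₂ z₀ x₁ (Or.inr hz₀2) (Or.inl hz₀1) with h' | h'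
    · exact (hmem1 _ _ h').1 rfl
    · exact (hmem2 _ _ h').2 rfl
  · intro h
    rcases h x₂ z₀ x₁ (Or.inl (Or.inr hz₀2)) (Or.inl (Or.inl hz₀1)) with (h' | h') | ⟨h', _⟩
    · exact (hmem1 _ _ h').1 rfl
    · exact (hmem2 _ _ h').2 rfl
    · exact hx h'.symm
  · intro a b hab hba
    exact hirrY a (htrY a b a hab hba)
end

section
/- In the join setup, suppose no node of X is of type (1) and no node of X is of type (1'). Then Y₀ = R₁ ∪ R₂ is transitive (hence a strict partial order on X ∪ {x₁,x₂}, being also irreflexive and asymmetric). -/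
/-- In the join setup, if no node of `X` is of type (1) or of type (1'),
then `Y₀ = R₁ ∪ R₂` is transitive (hence a strict partial order, being also irreflexive
and asymmetric). -/
theorem stmt_15 {E : Type*} (X : Set E) (x₁ x₂ : E)
    (hx : x₁ ≠ x₂) (hx1 : x₁ ∉ X) (hx2 : x₂ ∉ X)
    (R₁ R₂ : E → E → Prop)
    (hdom1 : ∀ a b, R₁ a b → a ∈ X ∪ {x₁} ∧ b ∈ X ∪ {x₁})
    (hirr1 : ∀ a, ¬ R₁ a a)
    (htr1 : ∀ a b c, R₁ a b → R₁ b c → R₁ a c)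
    (hdom2 : ∀ a b, R₂ a b → a ∈ X ∪ {x₂} ∧ b ∈ X ∪ {x₂})
    (hirr2 : ∀ a, ¬ R₂ a a)
    (htr2 : ∀ a b c, R₂ a b → R₂ b c → R₂ a c)
    (hagree : ∀ a ∈ X, ∀ b ∈ X, (R₁ a b ↔ R₂ a b))
    (hno1 : ¬ ∃ z ∈ X, R₁ x₁ z ∧ R₂ z x₂)
    (hno1' : ¬ ∃ z ∈ X, R₁ z x₁ ∧ R₂ x₂ z) :
    (∀ a b c, (R₁ a b ∨ R₂ a b) → (R₁ b c ∨ R₂ b c) → (R₁ a c ∨ R₂ a c)) ∧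
    (∀ a, ¬ (R₁ a a ∨ R₂ a a)) ∧
    (∀ a b, (R₁ a b ∨ R₂ a b) → ¬ (R₁ b a ∨ R₂ b a)) := by
  -- an element in both domains is in X
  have hboth : ∀ a, a ∈ X ∪ {x₁} → a ∈ X ∪ {x₂} → a ∈ X := by
    intro a h1 h2
    rcases h1 with h1 | h1
    · exact h1
    · rcases h2 with h2 | h2
      · exact h2
      · exact absurd (h1.symm.trans h2) hx
  -- mixed transitivity 1 : R₁ a b, R₂ b c
  have hmix1 : ∀ a b c, R₁ a b → R₂ b c → R₁ a c ∨ R₂ a c := by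
    intro a b c h1 h2
    have hb : b ∈ X := hboth b (hdom1 a b h1).2 (hdom2 b c h2).1
    rcases (hdom1 a b h1).1 with ha | ha
    · right
      exact htr2 a b c ((hagree a ha b hb).1 h1) h2
    · subst ha
      rcases (hdom2 b c h2).2 with hc | hc
      · left
        exact htr1 _ b c h1 ((hagree b hb c hc).2 h2)
      · subst hc
        exact absurd ⟨b, hb, h1, h2⟩ hno1
  -- mixed transitivity 2 : R₂ a b, R₁ b c
  have hmix2 : ∀ a b c, R₂ a b → R₁ b c → R₁ a c ∨ R₂ a c := by
    intro a b c h2 h1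
    have hb : b ∈ X := hboth b (hdom1 b c h1).1 (hdom2 a b h2).2
    rcases (hdom2 a b h2).1 with ha | ha
    · left
      exact htr1 a b c ((hagree a ha b hb).2 h2) h1
    · subst ha
      rcases (hdom1 b c h1).2 with hc | hc
      · right
        exact htr2 _ b c h2 ((hagree b hb c hc).1 h1)
      · subst hc
        exact absurd ⟨b, hb, h1, h2⟩ hno1'
  refine ⟨?_, ?_, ?_⟩
  · rintro a b c (h | h) (h' | h')
    · exact Or.inl (htr1 a b c h h')
    · exact hmix1 a b c h h'
    · exact hmix2 a b c h h'
    · exact Or.inr (htr2 a b c h h')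
  · rintro a (h | h)
    exacts [hirr1 a h, hirr2 a h]
  · rintro a b (h | h) (h' | h')
    · exact hirr1 a (htr1 a b a h h')
    · -- R₁ a b, R₂ b a : both a, b in X
      have ha : a ∈ X := hboth a (hdom1 a b h).1 (hdom2 b a h').2
      have hb : b ∈ X := hboth b (hdom1 a b h).2 (hdom2 b a h').1
      exact hirr2 a (htr2 a b a ((hagree a ha b hb).1 h) h')
    · have ha : a ∈ X := hboth a (hdom1 b a h').2 (hdom2 a b h).1
      have hb : b ∈ X := hboth b (hdom1 b a h').1 (hdom2 a b h).2
      exact hirr2 a (htr2 a b a h ((hagree b hb a ha).1 h'))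
    · exact hirr2 a (htr2 a b a h h')
end

section
/- In the join setup, suppose no node of X is of type (1) and no node of X is of type (1'). Then Y₁ = R₁ ∪ R₂ ∪ {(x₁,x₂)} is transitive if and only if no node of X is of type (2') and no node of X is of type (3). -/
/-- In the join setup, if no node of `X` is of type (1) or of type (1'),
then `Y₁ = R₁ ∪ R₂ ∪ {(x₁,x₂)}` is transitive iff no node of `X` is of type (2') and no
node of `X` is of type (3). -/
theorem stmt_16 {E : Type*} (X : Set E) (x₁ x₂ : E)
    (hx : x₁ ≠ x₂) (hx1 : x₁ ∉ X) (hx2 : x₂ ∉ X)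
    (R₁ R₂ : E → E → Prop)
    (hdom1 : ∀ a b, R₁ a b → a ∈ X ∪ {x₁} ∧ b ∈ X ∪ {x₁})
    (hirr1 : ∀ a, ¬ R₁ a a)
    (htr1 : ∀ a b c, R₁ a b → R₁ b c → R₁ a c)
    (hdom2 : ∀ a b, R₂ a b → a ∈ X ∪ {x₂} ∧ b ∈ X ∪ {x₂})
    (hirr2 : ∀ a, ¬ R₂ a a)
    (htr2 : ∀ a b c, R₂ a b → R₂ b c → R₂ a c)
    (hagree : ∀ a ∈ X, ∀ b ∈ X, (R₁ a b ↔ R₂ a b))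
    (hno1 : ¬ ∃ z ∈ X, R₁ x₁ z ∧ R₂ z x₂)
    (hno1' : ¬ ∃ z ∈ X, R₁ z x₁ ∧ R₂ x₂ z) :
    (∀ a b c, ((R₁ a b ∨ R₂ a b) ∨ (a = x₁ ∧ b = x₂)) →
        ((R₁ b c ∨ R₂ b c) ∨ (b = x₁ ∧ c = x₂)) →
        ((R₁ a c ∨ R₂ a c) ∨ (a = x₁ ∧ c = x₂))) ↔
      ((¬ ∃ z ∈ X, R₁ z x₁ ∧ ¬ R₂ z x₂ ∧ ¬ R₂ x₂ z) ∧
       (¬ ∃ z ∈ X, R₂ x₂ z ∧ ¬ R₁ z x₁ ∧ ¬ R₁ x₁ z)) := by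

  have hmid : ∀ v, v ∈ X ∪ ({x₁} : Set E) → v ∈ X ∪ ({x₂} : Set E) → v ∈ X := by
    rintro v (hv | hv) (hw | hw)
    · exact hv
    · exact hv
    · exact hw
    · exact absurd (hv.symm.trans hw) hx
  constructor
  · intro htr
    constructor
    · rintro ⟨z, hz, h1, h2, h3⟩
      rcases htr z x₁ x₂ (Or.inl (Or.inl h1)) (Or.inr ⟨rfl, rfl⟩) with (h | h) | ⟨hz1, _⟩
      · rcases (hdom1 z x₂ h).2 with h' | h'
        · exact hx2 h'
        · exact hx h'.symm
      · exact h2 h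
      · exact hx1 (hz1 ▸ hz)
    · rintro ⟨z, hz, h1, h2, h3⟩
      rcases htr x₁ x₂ z (Or.inr ⟨rfl, rfl⟩) (Or.inl (Or.inr h1)) with (h | h) | ⟨_, hz2⟩
      · exact h3 h
      · rcases (hdom2 x₁ z h).1 with h' | h'
        · exact hx1 h'
        · exact hx h'
      · exact hx2 (hz2 ▸ hz)
  · rintro ⟨hno2', hno3⟩ a b c hab hbc
    rcases hab with (h1ab | h2ab) | ⟨ha1, hb2⟩
    · rcases hbc with (h1bc | h2bc) | ⟨hb1, hc2⟩
      · exact Or.inl (Or.inl (htr1 _ _ _ h1ab h1bc))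
      · -- R₁ a b, R₂ b c
        have hb : b ∈ X := hmid b (hdom1 a b h1ab).2 (hdom2 b c h2bc).1
        rcases (hdom1 a b h1ab).1 with ha | ha
        · exact Or.inl (Or.inr (htr2 a b c ((hagree a ha b hb).mp h1ab) h2bc))
        · rcases (hdom2 b c h2bc).2 with hc | hc
          · exact Or.inl (Or.inl (htr1 a b c h1ab ((hagree b hb c hc).mpr h2bc)))
          · exact Or.inr ⟨ha, hc⟩
      · -- R₁ a b, b = x₁, c = x₂
        have h1ab' : R₁ a x₁ := hb1 ▸ h1ab
        have ha : a ∈ X := by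
          rcases (hdom1 a x₁ h1ab').1 with ha | ha
          · exact ha
          · exact absurd (ha ▸ h1ab') (hirr1 x₁)
        have h : R₂ a x₂ ∨ R₂ x₂ a := by
          by_contra h
          push_neg at h
          exact hno2' ⟨a, ha, h1ab', h.1, h.2⟩
        rcases h with h | h
        · exact Or.inl (Or.inr (hc2.symm ▸ h))
        · exact absurd ⟨a, ha, h1ab', h⟩ hno1'
    · rcases hbc with (h1bc | h2bc) | ⟨hb1, hc2⟩
      · -- R₂ a b, R₁ b c
        have hb : b ∈ X := hmid b (hdom1 b c h1bc).1 (hdom2 a b h2ab).2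
        rcases (hdom2 a b h2ab).1 with ha | ha
        · exact Or.inl (Or.inl (htr1 a b c ((hagree a ha b hb).mpr h2ab) h1bc))
        · rcases (hdom1 b c h1bc).2 with hc | hc
          · exact Or.inl (Or.inr (htr2 a b c h2ab ((hagree b hb c hc).mp h1bc)))
          · exact absurd ⟨b, hb, hc ▸ h1bc, ha ▸ h2ab⟩ hno1'
      · exact Or.inl (Or.inr (htr2 _ _ _ h2ab h2bc))
      · -- R₂ a b, b = x₁
        rcases (hdom2 a b h2ab).2 with h' | h'
        · exact absurd (hb1 ▸ h') hx1
        · exact absurd (hb1 ▸ h') hx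
    · rcases hbc with (h1bc | h2bc) | ⟨hb1, hc2⟩
      · rcases (hdom1 b c h1bc).1 with h' | h'
        · exact absurd (hb2 ▸ h') hx2
        · exact absurd (hb2 ▸ h').symm hx
      · -- x₁ x₂, R₂ x₂ c
        have h2bc' : R₂ x₂ c := hb2 ▸ h2bc
        have hc : c ∈ X := by
          rcases (hdom2 x₂ c h2bc').2 with hc | hc
          · exact hc
          · exact absurd (hc ▸ h2bc') (hirr2 x₂)
        have h : R₁ c x₁ ∨ R₁ x₁ c := by
          by_contra h
          push_neg at h
          exact hno3 ⟨c, hc, h2bc', h.1, h.2⟩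
        rcases h with h | h
        · exact absurd ⟨c, hc, h, h2bc'⟩ hno1'
        · exact Or.inl (Or.inl (ha1.symm ▸ h))
      · exact absurd (hb1 ▸ hb2 : x₁ = x₂) hx
end

section
/- In the join setup, suppose no node of X is of type (1) and no node of X is of type (1'). Then Y₂ = R₁ ∪ R₂ ∪ {(x₂,x₁)} is transitive if and only if no node of X is of type (2) and no node of X is of type (3'). -/
/-- In the join setup, if no node of `X` is of type (1) or of type (1'),
then `Y₂ = R₁ ∪ R₂ ∪ {(x₂,x₁)}` is transitive iff no node of `X` is of type (2) and no
node of `X` is of type (3'). -/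
theorem stmt_17 {E : Type*} (X : Set E) (x₁ x₂ : E)
    (hx : x₁ ≠ x₂) (hx1 : x₁ ∉ X) (hx2 : x₂ ∉ X)
    (R₁ R₂ : E → E → Prop)
    (hdom1 : ∀ a b, R₁ a b → a ∈ X ∪ {x₁} ∧ b ∈ X ∪ {x₁})
    (hirr1 : ∀ a, ¬ R₁ a a)
    (htr1 : ∀ a b c, R₁ a b → R₁ b c → R₁ a c)
    (hdom2 : ∀ a b, R₂ a b → a ∈ X ∪ {x₂} ∧ b ∈ X ∪ {x₂})
    (hirr2 : ∀ a, ¬ R₂ a a)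
    (htr2 : ∀ a b c, R₂ a b → R₂ b c → R₂ a c)
    (hagree : ∀ a ∈ X, ∀ b ∈ X, (R₁ a b ↔ R₂ a b))
    (hno1 : ¬ ∃ z ∈ X, R₁ x₁ z ∧ R₂ z x₂)
    (hno1' : ¬ ∃ z ∈ X, R₁ z x₁ ∧ R₂ x₂ z) :
    (∀ a b c, ((R₁ a b ∨ R₂ a b) ∨ (a = x₂ ∧ b = x₁)) →
        ((R₁ b c ∨ R₂ b c) ∨ (b = x₂ ∧ c = x₁)) →
        ((R₁ a c ∨ R₂ a c) ∨ (a = x₂ ∧ c = x₁))) ↔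
      ((¬ ∃ z ∈ X, R₁ x₁ z ∧ ¬ R₂ z x₂ ∧ ¬ R₂ x₂ z) ∧
       (¬ ∃ z ∈ X, R₂ z x₂ ∧ ¬ R₁ z x₁ ∧ ¬ R₁ x₁ z)) := by
  -- helper: x₂ is not related by R₁, x₁ not related by R₂
  have hmem1 : ∀ {a b : E}, R₁ a b → (a ∈ X ∨ a = x₁) ∧ (b ∈ X ∨ b = x₁) := by
    intro a b h
    obtain ⟨h1, h2⟩ := hdom1 a b h
    exact ⟨h1.imp id Set.mem_singleton_iff.mp, h2.imp id Set.mem_singleton_iff.mp⟩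
  have hmem2 : ∀ {a b : E}, R₂ a b → (a ∈ X ∨ a = x₂) ∧ (b ∈ X ∨ b = x₂) := by
    intro a b h
    obtain ⟨h1, h2⟩ := hdom2 a b h
    exact ⟨h1.imp id Set.mem_singleton_iff.mp, h2.imp id Set.mem_singleton_iff.mp⟩
  have hx2n1 : ∀ {a b : E}, R₁ a b → a ≠ x₂ ∧ b ≠ x₂ := by
    intro a b h
    obtain ⟨h1, h2⟩ := hmem1 h
    constructor
    · rintro rfl; rcases h1 with h1 | h1; exact hx2 h1; exact hx h1.symm
    · rintro rfl; rcases h2 with h2 | h2; exact hx2 h2; exact hx h2.symm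
  have hx1n2 : ∀ {a b : E}, R₂ a b → a ≠ x₁ ∧ b ≠ x₁ := by
    intro a b h
    obtain ⟨h1, h2⟩ := hmem2 h
    constructor
    · rintro rfl; rcases h1 with h1 | h1; exact hx1 h1; exact hx h1
    · rintro rfl; rcases h2 with h2 | h2; exact hx1 h2; exact hx h2
  constructor
  · intro htr
    constructor
    · rintro ⟨z, hz, h1z, hnz2, hn2z⟩
      rcases htr x₂ x₁ z (Or.inr ⟨rfl, rfl⟩) (Or.inl (Or.inl h1z)) with
        (h | h) | ⟨_, hz1⟩
      · exact (hx2n1 h).1 rfl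
      · exact hn2z h
      · exact hx1 (hz1 ▸ hz)
    · rintro ⟨z, hz, h2z, hnz1, hn1z⟩
      rcases htr z x₂ x₁ (Or.inl (Or.inr h2z)) (Or.inr ⟨rfl, rfl⟩) with
        (h | h) | ⟨hz2, _⟩
      · exact hnz1 h
      · exact (hx1n2 h).2 rfl
      · exact hx2 (hz2 ▸ hz)
  · rintro ⟨hno2, hno3'⟩ a b c hab hbc
    rcases hab with (hab | hab) | ⟨ha2, hb1⟩
    · -- R₁ a b
      rcases hbc with (hbc | hbc) | ⟨rfl, rfl⟩
      · exact Or.inl (Or.inl (htr1 a b c hab hbc))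
      · -- R₁ a b, R₂ b c : b ∈ X
        have hbX : b ∈ X := by
          rcases (hmem1 hab).2 with h | rfl
          · exact h
          · exact absurd hbc (fun h => (hx1n2 h).1 rfl)
        rcases (hmem1 hab).1 with haX | rfl
        · -- a ∈ X : R₂ a b, so R₂ a c
          exact Or.inl (Or.inr (htr2 a b c ((hagree a haX b hbX).mp hab) hbc))
        · -- a = x₁
          rcases (hmem2 hbc).2 with hcX | rfl
          · exact Or.inl (Or.inl (htr1 a b c hab ((hagree b hbX c hcX).mpr hbc)))
          · exact absurd ⟨b, hbX, hab, hbc⟩ hno1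
      · -- R₁ a x₂ : impossible
        exact absurd rfl (hx2n1 hab).2
    · -- R₂ a b
      rcases hbc with (hbc | hbc) | hbc
      · -- R₂ a b, R₁ b c : b ∈ X
        have hbX : b ∈ X := by
          rcases (hmem2 hab).2 with h | rfl
          · exact h
          · exact absurd hbc (fun h => (hx2n1 h).1 rfl)
        rcases (hmem2 hab).1 with haX | rfl
        · exact Or.inl (Or.inl (htr1 a b c ((hagree a haX b hbX).mpr hab) hbc))
        · -- a = x₂
          rcases (hmem1 hbc).2 with hcX | rfl
          · exact Or.inl (Or.inr (htr2 a b c hab ((hagree b hbX c hcX).mp hbc)))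
          · exact Or.inr ⟨rfl, rfl⟩
      · exact Or.inl (Or.inr (htr2 a b c hab hbc))
      · -- R₂ a x₂, c = x₁ : need R₁ a x₁
        obtain ⟨hb2, hc1⟩ := hbc
        rw [hb2] at hab
        have haX : a ∈ X := by
          rcases (hmem2 hab).1 with h | rfl
          · exact h
          · exact absurd hab (hirr2 _)
        rw [hc1]
        left; left
        by_contra hna1
        by_cases h1a : R₁ x₁ a
        · exact hno1 ⟨a, haX, h1a, hab⟩
        · exact hno3' ⟨a, haX, hab, hna1, h1a⟩
    · -- a = x₂, b = x₁
      rw [hb1] at hbc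
      rw [ha2]
      rcases hbc with (hbc | hbc) | ⟨hb2, _⟩
      · -- R₁ x₁ c : need R₂ x₂ c
        have hcX : c ∈ X := by
          rcases (hmem1 hbc).2 with h | rfl
          · exact h
          · exact absurd hbc (hirr1 _)
        left; right
        by_contra hn2c
        by_cases hc2 : R₂ c x₂
        · exact hno1 ⟨c, hcX, hbc, hc2⟩
        · exact hno2 ⟨c, hcX, hbc, hc2, hn2c⟩
      · exact absurd rfl (hx1n2 hbc).1
      · exact absurd hb2 hx
end
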